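/- arXiv:2202.03710 — 4 statements merged into one kernel-verified Lean document; each statement's English description precedes it below -/
import Mathlib

section
/- Let μ : ℝ → ℝ be analytic near ξ₀ with μ'(ξ₀) = 0, μ''(ξ₀) > 0 and μ'''(ξ₀) < 0. Then there exists e⋆ > μ(ξ₀) such that for every e ∈ (μ(ξ₀), e⋆), the equation μ(ξ) = e has exactly two solutions ξ₋ < ξ₀ < ξ₊ near ξ₀, and μ'(ξ₋) + μ'(ξ₊) < 0. -/
open Set Filter Topology Nat SignType

/-!
Near `ξ₀` write `μ (ξ₀ + x) = μ ξ₀ + a x² + b x³ + o(x³)` and `μ' (ξ₀ + x) = 2 a x + 3 b x² + o(x²)`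
with `a > 0 > b`. Since `μ'` has the sign of `x`, `μ` is V-shaped near `ξ₀` and each level `e`
slightly above `μ ξ₀` is attained exactly once on each side, at `ξ₋ = ξ₀ + s` and `ξ₊ = ξ₀ + t`.
The equation `μ ξ₋ = μ ξ₊` eliminates `a` from the current: with `w = t - s`,
`(μ' ξ₋ + μ' ξ₊) w = b w³ + o(w³) < 0`.
-/

theorem ContDiffAt.isLittleO_sub_taylor {f : ℝ → ℝ} {x₀ : ℝ} {n : ℕ}
    (hf : ContDiffAt ℝ n f x₀) :
    (fun x ↦ f x - ∑ k ∈ Finset.range (n + 1), iteratedDeriv k f x₀ / k ! * (x - x₀) ^ k)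
      =o[𝓝 x₀] fun x ↦ (x - x₀) ^ n := by
  obtain ⟨u, hu, hfu⟩ := hf.contDiffOn le_rfl (by simp)
  obtain ⟨δ, hδ, hball⟩ := Metric.mem_nhds_iff.mp hu
  have htaylor := taylor_isLittleO (convex_ball x₀ δ) (Metric.mem_ball_self hδ) (hfu.mono hball)
  rw [nhdsWithin_eq_nhds.mpr (Metric.ball_mem_nhds x₀ hδ)] at htaylor
  refine htaylor.congr_left fun x ↦ ?_
  simp only [taylor_within_apply, smul_eq_mul,
    iteratedDerivWithin_of_isOpen Metric.isOpen_ball (Metric.mem_ball_self hδ)]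
  congr 1
  exact Finset.sum_congr rfl fun k _ ↦ by ring

theorem ContDiffAt.eventually_abs_sub_cubic_le {f : ℝ → ℝ} {x₀ a b ε : ℝ}
    (hf : ContDiffAt ℝ 3 f x₀) (h₁ : deriv f x₀ = 0) (h₂ : iteratedDeriv 2 f x₀ = 2 * a)
    (h₃ : iteratedDeriv 3 f x₀ = 6 * b) (hε : 0 < ε) :
    ∀ᶠ x in 𝓝 x₀, |f x - f x₀ - (a * (x - x₀) ^ 2 + b * (x - x₀) ^ 3)| ≤ ε * |x - x₀| ^ 3 ∧
      |deriv f x - (2 * a * (x - x₀) + 3 * b * (x - x₀) ^ 2)| ≤ ε * |x - x₀| ^ 2 := by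
  have hf' : ContDiffAt ℝ 2 (deriv f) x₀ := hf.derivWithin (by norm_num)
  filter_upwards [hf.isLittleO_sub_taylor.def hε, hf'.isLittleO_sub_taylor.def hε] with x hE hF
  simp only [Finset.sum_range_succ, Finset.sum_range_zero, ← iteratedDeriv_succ', h₁, h₂, h₃,
    zero_add, iteratedDeriv_zero, iteratedDeriv_one, Real.norm_eq_abs, abs_pow] at hE hF
  norm_num [factorial] at hE hF
  constructor
  · convert hE using 2; ring
  · rw [sq_abs]; convert hF using 2; ring

theorem add_neg_of_abs_sub_cubic_le {a b ε s t y p q : ℝ} (hs : s < 0) (ht : 0 < t)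
    (hε : 3 * ε < -b)
    (hys : |y - (a * s ^ 2 + b * s ^ 3)| ≤ ε * |s| ^ 3)
    (hyt : |y - (a * t ^ 2 + b * t ^ 3)| ≤ ε * |t| ^ 3)
    (hp : |p - (2 * a * s + 3 * b * s ^ 2)| ≤ ε * |s| ^ 2)
    (hq : |q - (2 * a * t + 3 * b * t ^ 2)| ≤ ε * |t| ^ 2) :
    p + q < 0 := by
  set w := t - s
  have hw : 0 < w := by linarith
  have hsum : |s| + |t| = w := by rw [abs_of_neg hs, abs_of_pos ht]; ring
  have hcube : |s| ^ 3 + |t| ^ 3 ≤ w ^ 3 :=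
    hsum ▸ pow_add_pow_le (abs_nonneg s) (abs_nonneg t) three_ne_zero
  have hsq : |s| ^ 2 + |t| ^ 2 ≤ w ^ 2 :=
    hsum ▸ pow_add_pow_le (abs_nonneg s) (abs_nonneg t) two_ne_zero
  have hε0 : 0 ≤ ε :=
    nonneg_of_mul_nonneg_left ((abs_nonneg _).trans hys) (pow_pos (abs_pos.mpr hs.ne) 3)
  have hkey : (p + q) * w = b * w ^ 3
      + 2 * ((y - (a * s ^ 2 + b * s ^ 3)) - (y - (a * t ^ 2 + b * t ^ 3)))
      + ((p - (2 * a * s + 3 * b * s ^ 2)) + (q - (2 * a * t + 3 * b * t ^ 2))) * w := by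
    ring
  have hval : (y - (a * s ^ 2 + b * s ^ 3)) - (y - (a * t ^ 2 + b * t ^ 3)) ≤ ε * w ^ 3 := by
    linarith [(abs_le.mp hys).2, (abs_le.mp hyt).1, mul_le_mul_of_nonneg_left hcube hε0]
  have hder :
      (p - (2 * a * s + 3 * b * s ^ 2)) + (q - (2 * a * t + 3 * b * t ^ 2)) ≤ ε * w ^ 2 := by
    linarith [(abs_le.mp hp).2, (abs_le.mp hq).2, mul_le_mul_of_nonneg_left hsq hε0]
  have hneg : (p + q) * w < 0 := by
    rw [hkey]
    nlinarith [mul_le_mul_of_nonneg_right hder hw.le, pow_pos hw 3]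
  exact neg_of_mul_neg_left hneg hw.le

theorem strictAntiOn_strictMonoOn_of_sign_deriv {f : ℝ → ℝ} {x₀ r : ℝ} (hr : 0 ≤ r)
    (hf : ContinuousOn f (Icc (x₀ - r) (x₀ + r)))
    (hsign : ∀ x ∈ Ioo (x₀ - r) (x₀ + r), sign (deriv f x) = sign (x - x₀)) :
    StrictAntiOn f (Icc (x₀ - r) x₀) ∧ StrictMonoOn f (Icc x₀ (x₀ + r)) := by
  constructor
  · refine strictAntiOn_of_deriv_neg (convex_Icc _ _)
      (hf.mono (Icc_subset_Icc_right (by linarith))) fun x hx ↦ ?_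
    rw [interior_Icc] at hx
    rw [← sign_eq_neg_one_iff, hsign x ⟨hx.1, by linarith [hx.2]⟩, sign_eq_neg_one_iff]
    linarith [hx.2]
  · refine strictMonoOn_of_deriv_pos (convex_Icc _ _)
      (hf.mono (Icc_subset_Icc_left (by linarith))) fun x hx ↦ ?_
    rw [interior_Icc] at hx
    rw [← sign_eq_one_iff, hsign x ⟨by linarith [hx.1], hx.2⟩, sign_eq_one_iff]
    linarith [hx.1]

theorem exists_preimages_of_strictAntiOn_strictMonoOn {f : ℝ → ℝ} {x₀ r : ℝ} (hr : 0 < r)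
    (hf : ContinuousOn f (Icc (x₀ - r) (x₀ + r)))
    (hanti : StrictAntiOn f (Icc (x₀ - r) x₀)) (hmono : StrictMonoOn f (Icc x₀ (x₀ + r))) :
    ∃ estar > f x₀, ∀ e ∈ Ioo (f x₀) estar, ∃ ξm ξp : ℝ,
      ξm ∈ Ioo (x₀ - r) x₀ ∧ ξp ∈ Ioo x₀ (x₀ + r) ∧ f ξm = e ∧ f ξp = e ∧
        ∀ ξ ∈ Ioo (x₀ - r) (x₀ + r), f ξ = e → ξ = ξm ∨ ξ = ξp := by
  have hleft : x₀ - r ∈ Icc (x₀ - r) x₀ := left_mem_Icc.2 (by linarith)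
  have hright : x₀ + r ∈ Icc x₀ (x₀ + r) := right_mem_Icc.2 (by linarith)
  have hmidL : x₀ ∈ Icc (x₀ - r) x₀ := right_mem_Icc.2 (by linarith)
  have hmidR : x₀ ∈ Icc x₀ (x₀ + r) := left_mem_Icc.2 (by linarith)
  refine ⟨min (f (x₀ - r)) (f (x₀ + r)),
    lt_min (hanti hleft hmidL (by linarith)) (hmono hmidR hright (by linarith)), fun e he ↦ ?_⟩
  obtain ⟨ξm, hξm, hfm⟩ := intermediate_value_Ioo' (by linarith : x₀ - r ≤ x₀)
    (hf.mono (Icc_subset_Icc_right (by linarith))) ⟨he.1, he.2.trans_le (min_le_left _ _)⟩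
  obtain ⟨ξp, hξp, hfp⟩ := intermediate_value_Ioo (by linarith : x₀ ≤ x₀ + r)
    (hf.mono (Icc_subset_Icc_left (by linarith))) ⟨he.1, he.2.trans_le (min_le_right _ _)⟩
  refine ⟨ξm, ξp, hξm, hξp, hfm, hfp, fun ξ hξ hfξ ↦ ?_⟩
  rcases lt_trichotomy ξ x₀ with hlt | rfl | hgt
  · exact .inl <| hanti.injOn ⟨hξ.1.le, hlt.le⟩ (Ioo_subset_Icc_self hξm) (hfξ.trans hfm.symm)
  · exact absurd hfξ he.1.ne
  · exact .inr <| hmono.injOn ⟨hgt.le, hξ.2.le⟩ (Ioo_subset_Icc_self hξp) (hfξ.trans hfp.symm)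

/-- Negativity of the algebraic current near a non-degenerate analytic minimum with
negative third derivative. -/
theorem stmt0 (μ : ℝ → ℝ) (ξ₀ : ℝ) (hA : AnalyticAt ℝ μ ξ₀)
    (h1 : deriv μ ξ₀ = 0) (h2 : 0 < iteratedDeriv 2 μ ξ₀) (h3 : iteratedDeriv 3 μ ξ₀ < 0) :
    ∃ estar > μ ξ₀, ∃ r > (0:ℝ), ∀ e ∈ Set.Ioo (μ ξ₀) estar,
      ∃ ξm ξp : ℝ, ξm ∈ Set.Ioo (ξ₀ - r) ξ₀ ∧ ξp ∈ Set.Ioo ξ₀ (ξ₀ + r) ∧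
        μ ξm = e ∧ μ ξp = e ∧
        (∀ ξ ∈ Set.Ioo (ξ₀ - r) (ξ₀ + r), μ ξ = e → ξ = ξm ∨ ξ = ξp) ∧
        deriv μ ξm + deriv μ ξp < 0 := by
  set a := iteratedDeriv 2 μ ξ₀ / 2
  set b := iteratedDeriv 3 μ ξ₀ / 6
  have hb : b < 0 := div_neg_of_neg_of_pos h3 (by norm_num)
  have htaylor := (hA.contDiffAt (n := 3)).eventually_abs_sub_cubic_le (a := a) (b := b)
    (ε := -b / 6) h1 (by ring) (by ring) (by linarith)
  have hsign : ∀ᶠ x in 𝓝 ξ₀, sign (deriv μ x) = sign (x - ξ₀) :=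
    eventually_nhdsWithin_sign_eq_of_deriv_pos
      (by rwa [iteratedDeriv_succ, iteratedDeriv_one] at h2) h1
  have hcont : ∀ᶠ x in 𝓝 ξ₀, ContinuousAt μ x :=
    hA.eventually_analyticAt.mono fun x hx ↦ hx.continuousAt
  obtain ⟨r, hr, hnear⟩ :=
    (nhds_basis_Icc_pos ξ₀).eventually_iff.mp (htaylor.and (hsign.and hcont))
  obtain ⟨hanti, hmono⟩ := strictAntiOn_strictMonoOn_of_sign_deriv hr.le
    (fun x hx ↦ (hnear hx).2.2.continuousWithinAt)
    (fun x hx ↦ (hnear (Ioo_subset_Icc_self hx)).2.1)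
  obtain ⟨estar, hestar, hpre⟩ := exists_preimages_of_strictAntiOn_strictMonoOn hr
    (fun x hx ↦ (hnear hx).2.2.continuousWithinAt) hanti hmono
  refine ⟨estar, hestar, r, hr, fun e he ↦ ?_⟩
  obtain ⟨ξm, ξp, hξm, hξp, hμm, hμp, huniq⟩ := hpre e he
  refine ⟨ξm, ξp, hξm, hξp, hμm, hμp, huniq, ?_⟩
  obtain ⟨⟨hEm, hFm⟩, -⟩ := hnear ⟨hξm.1.le, by linarith [hξm.2]⟩
  obtain ⟨⟨hEp, hFp⟩, -⟩ := hnear ⟨by linarith [hξp.1], hξp.2.le⟩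
  rw [hμm] at hEm
  rw [hμp] at hEp
  exact add_neg_of_abs_sub_cubic_le (sub_neg.2 hξm.2) (sub_pos.2 hξp.1) (by linarith)
    hEm hEp hFm hFp
end

section
/- Let H be a Hilbert space, T a bijective closed operator with bounded inverse, and C a bounded self-adjoint operator. Suppose there is a constant κ > 0 such that for all u ∈ Dom T, |⟨Tu, u⟩| + ‖Tu‖² ≥ κ ‖u‖². Then ‖T^{-1} C‖ ≤ κ^{-1/2} (‖C‖ + ‖C T^{-1} C‖^{1/2}). -/
/-!
Apply the coercivity inequality to `u = T⁻¹Cφ`, for which `Tu = Cφ`. Since `C` is self-adjoint,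
`⟪Tu, u⟫ = ⟪Cφ, T⁻¹Cφ⟫ = ⟪φ, CT⁻¹Cφ⟫`, so `κ‖u‖² ≤ (‖CT⁻¹C‖ + ‖C‖²)‖φ‖²`, and taking square
roots with `√(a² + b) ≤ a + √b` gives the bound.
-/

open ContinuousLinearMap

lemma Real.le_sqrt_inv_mul_add_sqrt_mul {κ a b x y : ℝ} (hκ : 0 < κ) (ha : 0 ≤ a) (hb : 0 ≤ b)
    (hy : 0 ≤ y) (h : κ * x ^ 2 ≤ (a ^ 2 + b) * y ^ 2) : x ≤ √κ⁻¹ * (a + √b) * y := by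
  have hsq : x ^ 2 ≤ (√κ⁻¹ * (a + √b) * y) ^ 2 := by
    calc x ^ 2 ≤ κ⁻¹ * ((a ^ 2 + b) * y ^ 2) := by rwa [← div_eq_inv_mul, le_div_iff₀' hκ]
      _ ≤ κ⁻¹ * ((a ^ 2 + 2 * a * √b + b) * y ^ 2) := by gcongr; nlinarith [Real.sqrt_nonneg b]
      _ = (√κ⁻¹ * (a + √b) * y) ^ 2 := by
        rw [mul_pow, mul_pow, Real.sq_sqrt (inv_nonneg.mpr hκ.le), add_sq, Real.sq_sqrt hb]
        ring
  exact (le_abs_self x).trans (abs_le_of_sq_le_sq hsq (by positivity))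

section

variable {𝕜 H : Type*} [RCLike 𝕜] [NormedAddCommGroup H] [InnerProductSpace 𝕜 H] [CompleteSpace H]

lemma IsSelfAdjoint.norm_inner_apply_apply_le {C : H →L[𝕜] H} (hC : IsSelfAdjoint C)
    (S : H →L[𝕜] H) (φ : H) : ‖inner 𝕜 (C φ) (S (C φ))‖ ≤ ‖C.comp (S.comp C)‖ * ‖φ‖ ^ 2 := by
  have hsymm : inner 𝕜 (C φ) (S (C φ)) = inner 𝕜 φ (C.comp (S.comp C) φ) :=
    hC.isSymmetric φ (S (C φ))
  rw [hsymm]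
  calc ‖inner 𝕜 φ (C.comp (S.comp C) φ)‖ ≤ ‖φ‖ * ‖C.comp (S.comp C) φ‖ := norm_inner_le_norm _ _
    _ ≤ ‖φ‖ * (‖C.comp (S.comp C)‖ * ‖φ‖) := by gcongr; exact le_opNorm _ _
    _ = ‖C.comp (S.comp C)‖ * ‖φ‖ ^ 2 := by ring

lemma IsSelfAdjoint.opNorm_comp_le_of_coercive {C : H →L[𝕜] H} (hC : IsSelfAdjoint C)
    {S : H →L[𝕜] H} {κ : ℝ} (hκ : 0 < κ)
    (hcoer : ∀ v, κ * ‖S v‖ ^ 2 ≤ ‖inner 𝕜 v (S v)‖ + ‖v‖ ^ 2) :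
    ‖S.comp C‖ ≤ √κ⁻¹ * (‖C‖ + √‖C.comp (S.comp C)‖) := by
  refine opNorm_le_bound _ (by positivity) fun φ => ?_
  refine Real.le_sqrt_inv_mul_add_sqrt_mul hκ (norm_nonneg _) (norm_nonneg _) (norm_nonneg _) ?_
  have hCφ : ‖C φ‖ ^ 2 ≤ ‖C‖ ^ 2 * ‖φ‖ ^ 2 := by
    rw [← mul_pow]; gcongr; exact le_opNorm _ _
  calc κ * ‖S (C φ)‖ ^ 2 ≤ ‖inner 𝕜 (C φ) (S (C φ))‖ + ‖C φ‖ ^ 2 := hcoer (C φ)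
    _ ≤ ‖C.comp (S.comp C)‖ * ‖φ‖ ^ 2 + ‖C‖ ^ 2 * ‖φ‖ ^ 2 :=
      add_le_add (hC.norm_inner_apply_apply_le S φ) hCφ
    _ = (‖C‖ ^ 2 + ‖C.comp (S.comp C)‖) * ‖φ‖ ^ 2 := by ring

end

theorem stmt5_general {H : Type*} [NormedAddCommGroup H] [InnerProductSpace ℂ H] [CompleteSpace H]
    (T : H →ₗ.[ℂ] H)
    (Tinv C : H →L[ℂ] H) (hC : IsSelfAdjoint C)
    (hright : ∀ v : H, ∃ hv : Tinv v ∈ T.domain, T ⟨Tinv v, hv⟩ = v)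
    (κ : ℝ) (hκ : 0 < κ)
    (hcoer : ∀ u : T.domain, κ * ‖(u : H)‖ ^ 2 ≤ ‖(inner ℂ (T u) ((u : H)) : ℂ)‖ + ‖T u‖ ^ 2) :
    ‖Tinv.comp C‖ ≤ Real.sqrt κ⁻¹ * (‖C‖ + Real.sqrt ‖C.comp (Tinv.comp C)‖) := by
  refine hC.opNorm_comp_le_of_coercive hκ fun v => ?_
  obtain ⟨hv, hTv⟩ := hright v
  simpa only [hTv] using hcoer ⟨Tinv v, hv⟩

/-- Abstract quadratic-estimate lemma: if `|⟨Tu,u⟩| + ‖Tu‖² ≥ κ‖u‖²` on `Dom T` for a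
bijective closed operator `T` with bounded inverse `Tinv`, and `C` is bounded
self-adjoint, then `‖T⁻¹C‖ ≤ κ^{-1/2}(‖C‖ + ‖CT⁻¹C‖^{1/2})`. -/
theorem stmt5 {H : Type*} [NormedAddCommGroup H] [InnerProductSpace ℂ H] [CompleteSpace H]
    (T : H →ₗ.[ℂ] H) (hTclosed : IsClosed (T.graph : Set (H × H)))
    (Tinv C : H →L[ℂ] H) (hC : IsSelfAdjoint C)
    (hleft : ∀ u : T.domain, Tinv (T u) = (u : H))
    (hright : ∀ v : H, ∃ hv : Tinv v ∈ T.domain, T ⟨Tinv v, hv⟩ = v)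
    (κ : ℝ) (hκ : 0 < κ)
    (hcoer : ∀ u : T.domain, κ * ‖(u : H)‖ ^ 2 ≤ ‖(inner ℂ (T u) ((u : H)) : ℂ)‖ + ‖T u‖ ^ 2) :
    ‖Tinv.comp C‖ ≤ Real.sqrt κ⁻¹ * (‖C‖ + Real.sqrt ‖C.comp (Tinv.comp C)‖) :=
  stmt5_general T Tinv C hC hright κ hκ hcoer
end

section
/- Let F : (0, ε₀] → [0, ∞) be differentiable with |F'(ε)| ≤ K₁ ε^{-1/2} (c + F(ε)^{1/2}) for constants K₁, c > 0 and all ε ∈ (0, ε₀], and suppose F(ε) ≤ K|ln ε| + F(ε₀) for all ε ∈ (0, ε₀] with ε₀ ≤ 1 and K > 0. Then sup_{ε ∈ (0, ε₀]} F(ε) ≤ F(ε₀) + K₁ ( (c + F(ε₀)^{1/2}) ∫₀¹ t^{-1/2} dt + K^{1/2} ∫₀¹ |ln t|^{1/2} t^{-1/2} dt ). -/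
/-!
Feeding the a priori bound `F ≤ K |ln ε| + F(ε₀)` into the right-hand side of the differential
inequality, via `√(a + b) ≤ √a + √b`, bounds `|F'(ε)|` by
`K₁ ((c + √F(ε₀)) ε^{-1/2} + √K |ln ε|^{1/2} ε^{-1/2})`, which no longer involves `F`.
Integrating from `ε` to `ε₀` and enlarging the range of integration to `(0, 1)` gives the bound;
both integrands are integrable near `0` because `|ln t|^{1/2} t^{-1/2} ≤ √2 t^{-3/4}`.
-/

open MeasureTheory Set Real

theorem Real.sqrt_add_le_sqrt_add_sqrt (x y : ℝ) : √(x + y) ≤ √x + √y := by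
  rw [sqrt_le_left (by positivity)]
  nlinarith [sq_sqrt' (x := x), sq_sqrt' (x := y), le_max_left x 0, le_max_left y 0,
    mul_nonneg (sqrt_nonneg x) (sqrt_nonneg y)]

theorem Real.sqrt_abs_log_div_sqrt_le {t : ℝ} (ht : 0 < t) (ht1 : t ≤ 1) :
    √|log t| / √t ≤ √2 * t ^ (-(3 / 4) : ℝ) := by
  have hlog : |log t| ≤ 2 * t ^ (-(1 / 2) : ℝ) := by
    have := log_le_rpow_div (inv_nonneg.2 ht.le) (by norm_num : (0 : ℝ) < 1 / 2)
    rw [log_inv, inv_rpow ht.le, ← rpow_neg ht.le] at this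
    rw [abs_of_nonpos (log_nonpos ht.le ht1)]
    linarith
  calc √|log t| / √t ≤ √(2 * t ^ (-(1 / 2) : ℝ)) / √t := by gcongr
    _ = √2 * t ^ (-(3 / 4) : ℝ) := by
      rw [sqrt_mul zero_le_two, sqrt_eq_rpow (t ^ _), sqrt_eq_rpow t, ← rpow_mul ht.le,
        mul_div_assoc, ← rpow_sub ht]
      norm_num

theorem intervalIntegrable_one_div_sqrt :
    IntervalIntegrable (fun t => 1 / √t) volume 0 1 := by
  refine (intervalIntegral.intervalIntegrable_rpow' (r := -(1 / 2)) (by norm_num)).congr ?_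
  rw [uIoc_of_le zero_le_one]
  intro t ht
  simp only [rpow_neg ht.1.le, one_div, sqrt_eq_rpow]

theorem intervalIntegrable_sqrt_abs_log_div_sqrt :
    IntervalIntegrable (fun t => √|log t| / √t) volume 0 1 := by
  refine ((intervalIntegral.intervalIntegrable_rpow' (r := -(3 / 4)) (by norm_num)).const_mul
    √2).mono_fun' (by fun_prop : Measurable _).aestronglyMeasurable ?_
  rw [uIoc_of_le zero_le_one]
  filter_upwards [ae_restrict_mem measurableSet_Ioc] with t ht
  rw [norm_of_nonneg (by positivity)]
  exact sqrt_abs_log_div_sqrt_le ht.1 ht.2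

theorem sub_le_integral_of_neg_deriv_le {f g : ℝ → ℝ} {a b : ℝ} (hab : a ≤ b)
    (hf : ∀ x ∈ Icc a b, DifferentiableAt ℝ f x) (hg : IntervalIntegrable g volume a b)
    (hfg : ∀ x ∈ Ioo a b, -deriv f x ≤ g x) : f a - f b ≤ ∫ x in a..b, g x := by
  have := intervalIntegral.sub_le_integral_of_hasDeriv_right_of_le hab
    (fun x hx => (hf x hx).continuousAt.neg.continuousWithinAt)
    (fun x hx => (hf x (Ioo_subset_Icc_self hx)).hasDerivAt.neg.hasDerivWithinAt)
    ((intervalIntegrable_iff_integrableOn_Icc_of_le hab).1 hg) hfg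
  simp only [Pi.neg_apply] at this
  linarith

theorem neg_le_of_abs_le_mul_sqrt_of_le_abs_log {d x y c K₁ K M : ℝ} (hK₁ : 0 ≤ K₁)
    (hd : |d| ≤ K₁ / √x * (c + √y)) (hy : y ≤ K * |log x| + M) :
    -d ≤ K₁ * (c + √M) * (1 / √x) + K₁ * √K * (√|log x| / √x) := by
  have hy' : √y ≤ √K * √|log x| + √M :=
    calc √y ≤ √(K * |log x| + M) := sqrt_le_sqrt hy
      _ ≤ √(K * |log x|) + √M := sqrt_add_le_sqrt_add_sqrt _ _
      _ = √K * √|log x| + √M := by rw [sqrt_mul' _ (abs_nonneg _)]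
  calc -d ≤ |d| := neg_le_abs d
    _ ≤ K₁ / √x * (c + √y) := hd
    _ ≤ K₁ / √x * (c + (√K * √|log x| + √M)) := by gcongr
    _ = K₁ * (c + √M) * (1 / √x) + K₁ * √K * (√|log x| / √x) := by ring

theorem stmt8_general (F : ℝ → ℝ) (ε₀ K₁ c K : ℝ) (hε₀1 : ε₀ ≤ 1)
    (hK₁ : 0 < K₁) (hc : 0 < c)
    (hdiff : ∀ ε ∈ Set.Ioc (0:ℝ) ε₀, DifferentiableAt ℝ F ε)
    (hbound : ∀ ε ∈ Set.Ioc (0:ℝ) ε₀,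
      |deriv F ε| ≤ K₁ / Real.sqrt ε * (c + Real.sqrt (F ε)))
    (hlog : ∀ ε ∈ Set.Ioc (0:ℝ) ε₀, F ε ≤ K * |Real.log ε| + F ε₀) :
    ∀ ε ∈ Set.Ioc (0:ℝ) ε₀,
      F ε ≤ F ε₀ + K₁ * ((c + Real.sqrt (F ε₀)) * (∫ t in (0:ℝ)..1, 1 / Real.sqrt t)
        + Real.sqrt K * ∫ t in (0:ℝ)..1, Real.sqrt |Real.log t| / Real.sqrt t) := by
  rintro ε ⟨hε, hεε₀⟩
  set g : ℝ → ℝ := fun t => K₁ * (c + √(F ε₀)) * (1 / √t) + K₁ * √K * (√|log t| / √t)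
  have hg : IntervalIntegrable g volume 0 1 :=
    (intervalIntegrable_one_div_sqrt.const_mul _).add
      (intervalIntegrable_sqrt_abs_log_div_sqrt.const_mul _)
  have hsub : Icc ε ε₀ ⊆ Ioc 0 ε₀ := fun x hx => ⟨hε.trans_le hx.1, hx.2⟩
  have hFg : F ε - F ε₀ ≤ ∫ t in ε..ε₀, g t :=
    sub_le_integral_of_neg_deriv_le hεε₀ (fun x hx => hdiff x (hsub hx))
      (hg.mono_set (by rw [uIcc_of_le hεε₀, uIcc_of_le zero_le_one]; gcongr))
      fun x hx => neg_le_of_abs_le_mul_sqrt_of_le_abs_log hK₁.le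
        (hbound x (hsub (Ioo_subset_Icc_self hx))) (hlog x (hsub (Ioo_subset_Icc_self hx)))
  have hg_mono : ∫ t in ε..ε₀, g t ≤ ∫ t in (0:ℝ)..1, g t :=
    intervalIntegral.integral_mono_interval hε.le hεε₀ hε₀1
      (Filter.Eventually.of_forall fun t => by positivity) hg
  rw [intervalIntegral.integral_add (intervalIntegrable_one_div_sqrt.const_mul _)
    (intervalIntegrable_sqrt_abs_log_div_sqrt.const_mul _), intervalIntegral.integral_const_mul,
    intervalIntegral.integral_const_mul] at hg_mono
  linarith

/-- Bootstrap: a differential inequality with square-root nonlinearity together with an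
a priori logarithmic bound yields a uniform bound as `ε ↓ 0`. -/
theorem stmt8 (F : ℝ → ℝ) (ε₀ K₁ c K : ℝ) (hε₀ : 0 < ε₀) (hε₀1 : ε₀ ≤ 1)
    (hK₁ : 0 < K₁) (hc : 0 < c) (hK : 0 < K)
    (hFnn : ∀ ε ∈ Set.Ioc (0:ℝ) ε₀, 0 ≤ F ε)
    (hdiff : ∀ ε ∈ Set.Ioc (0:ℝ) ε₀, DifferentiableAt ℝ F ε)
    (hbound : ∀ ε ∈ Set.Ioc (0:ℝ) ε₀,
      |deriv F ε| ≤ K₁ / Real.sqrt ε * (c + Real.sqrt (F ε)))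
    (hlog : ∀ ε ∈ Set.Ioc (0:ℝ) ε₀, F ε ≤ K * |Real.log ε| + F ε₀) :
    ∀ ε ∈ Set.Ioc (0:ℝ) ε₀,
      F ε ≤ F ε₀ + K₁ * ((c + Real.sqrt (F ε₀)) * (∫ t in (0:ℝ)..1, 1 / Real.sqrt t)
        + Real.sqrt K * ∫ t in (0:ℝ)..1, Real.sqrt |Real.log t| / Real.sqrt t) :=
  stmt8_general F ε₀ K₁ c K hε₀1 hK₁ hc hdiff hbound hlog
end

section
/- Let L, A be self-adjoint and suppose 𝟙_J(L)[L,iA]𝟙_J(L) ≥ c₀ 𝟙_J(L) with c₀ > 0, that [L,iA] is bounded with ‖[L,iA]‖ ≤ m, and let W be bounded self-adjoint with ‖[W, iA]‖ ≤ w. Let M = L + W and let I ⊂ J with d := dist(I, Jᶜ) > 0. If φ ∈ range 𝟙_I(M) decomposes as φ = φ₁ + φ₂ with φ₁ = 𝟙_J(L)φ and ‖φ₂‖ ≤ c‖φ‖, then ⟨[M, iA]φ, φ⟩ ≥ (c₀(1-c)² - m(2c + c²) - w) ‖φ‖². -/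
/-!
Write `B = [L,iA]` and `C = [W,iA]`, so that `[M,iA] = B + C`. Expanding `⟨Bφ, φ⟩` along
`φ = φ₁ + φ₂`, the diagonal term `⟨Bφ₁, φ₁⟩` is at least `c₀‖φ₁‖² ≥ c₀(1-c)²‖φ‖²`, since
`‖φ₁‖ ≥ ‖φ‖ - ‖φ₂‖`, while the three terms involving `φ₂` are each bounded by `m` times the
product of the norms, with `‖φ₁‖ ≤ ‖φ‖` because `P` is an orthogonal projection. The
perturbation contributes at least `-w‖φ‖²`.
-/

open ContinuousLinearMap

section

variable {H : Type*} [NormedAddCommGroup H] [InnerProductSpace ℂ H]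

lemma neg_mul_norm_mul_norm_le_re_inner_apply {T : H →L[ℂ] H} {m : ℝ} (hT : ‖T‖ ≤ m)
    (x y : H) : -(m * ‖x‖ * ‖y‖) ≤ (inner ℂ (T x) y).re := by
  refine neg_le_of_abs_le ?_
  calc |(inner ℂ (T x) y).re| ≤ ‖inner ℂ (T x) y‖ := Complex.abs_re_le_norm _
    _ ≤ ‖T x‖ * ‖y‖ := norm_inner_le_norm _ _
    _ ≤ ‖T‖ * ‖x‖ * ‖y‖ := by gcongr; exact T.le_opNorm x
    _ ≤ m * ‖x‖ * ‖y‖ := by gcongr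

lemma re_inner_apply_add_add (T : H →L[ℂ] H) (x y : H) :
    (inner ℂ (T (x + y)) (x + y)).re =
      (inner ℂ (T x) x).re + (inner ℂ (T x) y).re + (inner ℂ (T y) x).re +
        (inner ℂ (T y) y).re := by
  simp only [map_add, inner_add_left, inner_add_right, Complex.add_re]
  ring

lemma smul_commutator_add (L W A : H →L[ℂ] H) :
    Complex.I • ((L + W).comp A - A.comp (L + W)) =
      Complex.I • (L.comp A - A.comp L) + Complex.I • (W.comp A - A.comp W) := by
  rw [add_comp, comp_add, ← smul_add]
  abel_nf

lemma re_inner_apply_add_ge {B : H →L[ℂ] H} {c₀ m c : ℝ} (hm : ‖B‖ ≤ m) (hc₀ : 0 ≤ c₀)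
    (hc : c ≤ 1) {x y : H} (hx : c₀ * ‖x‖ ^ 2 ≤ (inner ℂ (B x) x).re)
    (hx_le : ‖x‖ ≤ ‖x + y‖) (hy : ‖y‖ ≤ c * ‖x + y‖) :
    (c₀ * (1 - c) ^ 2 - m * (2 * c + c ^ 2)) * ‖x + y‖ ^ 2 ≤
      (inner ℂ (B (x + y)) (x + y)).re := by
  have hm₀ : 0 ≤ m := (norm_nonneg B).trans hm
  have hx_ge : (1 - c) * ‖x + y‖ ≤ ‖x‖ := by linarith [norm_add_le x y]
  have hdiag : c₀ * ((1 - c) * ‖x + y‖) ^ 2 ≤ c₀ * ‖x‖ ^ 2 := by gcongr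
  have hxy : ‖x‖ * ‖y‖ ≤ c * ‖x + y‖ ^ 2 := by
    calc ‖x‖ * ‖y‖ ≤ ‖x + y‖ * (c * ‖x + y‖) := by gcongr
      _ = c * ‖x + y‖ ^ 2 := by ring
  have hyy : ‖y‖ * ‖y‖ ≤ c ^ 2 * ‖x + y‖ ^ 2 := by
    calc ‖y‖ * ‖y‖ ≤ (c * ‖x + y‖) * (c * ‖x + y‖) := by
          gcongr; exact (norm_nonneg y).trans hy
      _ = c ^ 2 * ‖x + y‖ ^ 2 := by ring
  have hxy' : ‖y‖ * ‖x‖ ≤ c * ‖x + y‖ ^ 2 := by rwa [mul_comm]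
  rw [re_inner_apply_add_add]
  linarith [neg_mul_norm_mul_norm_le_re_inner_apply hm x y,
    neg_mul_norm_mul_norm_le_re_inner_apply hm y x,
    neg_mul_norm_mul_norm_le_re_inner_apply hm y y,
    mul_le_mul_of_nonneg_left hxy hm₀, mul_le_mul_of_nonneg_left hxy' hm₀,
    mul_le_mul_of_nonneg_left hyy hm₀]

end

theorem stmt14_general {H : Type*} [NormedAddCommGroup H] [InnerProductSpace ℂ H] [CompleteSpace H]
    (L A W P : H →L[ℂ] H) (hPsa : IsSelfAdjoint P) (hPid : P.comp P = P)
    (c₀ m w c : ℝ) (hc₀ : 0 < c₀) (hc1 : c ≤ 1)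
    (hMourre : ∀ v : H, c₀ * ‖P v‖ ^ 2 ≤
      ((inner ℂ ((Complex.I • (L.comp A - A.comp L)) (P v)) (P v) : ℂ)).re)
    (hm : ‖Complex.I • (L.comp A - A.comp L)‖ ≤ m)
    (hw : ‖Complex.I • (W.comp A - A.comp W)‖ ≤ w)
    (φ φ₁ φ₂ : H) (hφ₁ : φ₁ = P φ) (hφ₂ : φ₂ = φ - φ₁) (hsmall : ‖φ₂‖ ≤ c * ‖φ‖) :
    (c₀ * (1 - c) ^ 2 - m * (2 * c + c ^ 2) - w) * ‖φ‖ ^ 2 ≤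
      ((inner ℂ ((Complex.I • ((L + W).comp A - A.comp (L + W))) φ) φ : ℂ)).re := by
  have hφ : φ = φ₁ + φ₂ := by rw [hφ₂, add_sub_cancel]
  have hφ₁_le : ‖φ₁‖ ≤ ‖φ‖ := by
    rw [hφ₁]
    simpa using le_of_opNorm_le P (IsStarProjection.norm_le P ⟨hPid, hPsa⟩) φ
  have hB := re_inner_apply_add_ge hm hc₀.le hc1 (hφ₁ ▸ hMourre φ) (hφ ▸ hφ₁_le)
    (hφ ▸ hsmall)
  have hC := neg_mul_norm_mul_norm_le_re_inner_apply hw φ φ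
  rw [← hφ] at hB
  rw [smul_commutator_add, add_apply, inner_add_left, Complex.add_re]
  nlinarith

/-- Stability of the Mourre estimate under perturbation: if `[L,iA] ≥ c₀` on the range of
the orthogonal projection `P = 𝟙_J(L)`, `‖[L,iA]‖ ≤ m`, `‖[W,iA]‖ ≤ w`, and
`φ = φ₁ + φ₂` with `φ₁ = Pφ` and `‖φ₂‖ ≤ c‖φ‖`, then
`⟨[M,iA]φ, φ⟩ ≥ (c₀(1-c)² - m(2c+c²) - w)‖φ‖²` for `M = L + W`. -/
theorem stmt14 {H : Type*} [NormedAddCommGroup H] [InnerProductSpace ℂ H] [CompleteSpace H]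
    (L A W P : H →L[ℂ] H) (hL : IsSelfAdjoint L) (hA : IsSelfAdjoint A)
    (hW : IsSelfAdjoint W) (hPsa : IsSelfAdjoint P) (hPid : P.comp P = P)
    (c₀ m w c : ℝ) (hc₀ : 0 < c₀) (hc0 : 0 ≤ c) (hc1 : c ≤ 1)
    (hMourre : ∀ v : H, c₀ * ‖P v‖ ^ 2 ≤
      ((inner ℂ ((Complex.I • (L.comp A - A.comp L)) (P v)) (P v) : ℂ)).re)
    (hm : ‖Complex.I • (L.comp A - A.comp L)‖ ≤ m)
    (hw : ‖Complex.I • (W.comp A - A.comp W)‖ ≤ w)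
    (φ φ₁ φ₂ : H) (hφ₁ : φ₁ = P φ) (hφ₂ : φ₂ = φ - φ₁) (hsmall : ‖φ₂‖ ≤ c * ‖φ‖) :
    (c₀ * (1 - c) ^ 2 - m * (2 * c + c ^ 2) - w) * ‖φ‖ ^ 2 ≤
      ((inner ℂ ((Complex.I • ((L + W).comp A - A.comp (L + W))) φ) φ : ℂ)).re :=
  stmt14_general L A W P hPsa hPid c₀ m w c hc₀ hc1 hMourre hm hw φ φ₁ φ₂ hφ₁ hφ₂ hsmall
end
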